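/- arXiv:1602.03486 — 5 statements merged into one kernel-verified Lean document; each statement's English description precedes it below -/
import Mathlib

section
/- Let n be a positive integer and let P be a real polynomial such that P^{(2j-1)}(0) = 0 for 1 ≤ j ≤ n−1, P^{(2n-1)}(0) = (−1)^n, P^{(2j-1)}(π) = 0 for 1 ≤ j ≤ n, and deg P ≤ 2n. Then for every positive integer k, ∫_0^π P(x) cos(k x) dx = 1/k^{2n}. -/
/-!
Integrating by parts twice against `cos (k x)` on `[0, π]` (where `sin (k π) = 0`) gives
`∫ Q cos(kx) = (Q'(π) (-1)^k - Q'(0)) / k² - k⁻² ∫ Q'' cos(kx)`. Iterating `n` times, the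
remainder involves `Q^{(2n+2)}`, which vanishes once `deg Q ≤ 2n`, so the integral is a sum of
boundary values of odd derivatives. The hypotheses kill all of them except `P^{(2n-1)}(0)`,
which contributes `1 / k^{2n}`.
-/

open Polynomial

namespace Polynomial

theorem hasDerivAt_eval_mul_sin_add_eval_derivative_mul_cos (Q : ℝ[X]) {k : ℝ} (hk : k ≠ 0)
    (x : ℝ) :
    HasDerivAt (fun x => Q.eval x * Real.sin (k * x) / k
        + (derivative Q).eval x * Real.cos (k * x) / k ^ 2)
      (Q.eval x * Real.cos (k * x)
        + (derivative (derivative Q)).eval x * Real.cos (k * x) / k ^ 2) x := by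
  have hkx : HasDerivAt (fun x => k * x) k x := by simpa using (hasDerivAt_id x).const_mul k
  refine ((((Q.hasDerivAt x).mul hkx.sin).div_const k).add
    ((((derivative Q).hasDerivAt x).mul hkx.cos).div_const (k ^ 2))).congr_deriv ?_
  field_simp
  ring

theorem integral_eval_mul_cos (Q : ℝ[X]) (a b : ℝ) {k : ℝ} (hk : k ≠ 0) :
    ∫ x in a..b, Q.eval x * Real.cos (k * x)
      = (Q.eval b * Real.sin (k * b) - Q.eval a * Real.sin (k * a)) / k
        + ((derivative Q).eval b * Real.cos (k * b)
          - (derivative Q).eval a * Real.cos (k * a)) / k ^ 2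
        - (∫ x in a..b, (derivative (derivative Q)).eval x * Real.cos (k * x)) / k ^ 2 := by
  have hcont : ∀ R : ℝ[X], Continuous fun x => R.eval x * Real.cos (k * x) := fun _ => by
    fun_prop
  have hsum := intervalIntegral.integral_eq_sub_of_hasDerivAt
    (fun x _ => Q.hasDerivAt_eval_mul_sin_add_eval_derivative_mul_cos hk x)
    (((hcont Q).add ((hcont _).div_const _)).intervalIntegrable a b)
  rw [intervalIntegral.integral_add ((hcont Q).intervalIntegrable a b)
    (((hcont _).div_const _).intervalIntegrable a b), intervalIntegral.integral_div] at hsum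
  rw [eq_sub_iff_add_eq, hsum]
  ring

theorem integral_zero_pi_eval_mul_cos_nat (Q : ℝ[X]) {k : ℕ} (hk : k ≠ 0) :
    ∫ x in (0 : ℝ)..Real.pi, Q.eval x * Real.cos (k * x)
      = ((derivative Q).eval Real.pi * (-1) ^ k - (derivative Q).eval 0) / (k : ℝ) ^ 2
        - (∫ x in (0 : ℝ)..Real.pi, (derivative (derivative Q)).eval x * Real.cos (k * x))
          / (k : ℝ) ^ 2 := by
  rw [Q.integral_eval_mul_cos 0 Real.pi (Nat.cast_ne_zero.mpr hk), Real.sin_nat_mul_pi,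
    Real.cos_nat_mul_pi]
  simp

theorem integral_zero_pi_eval_mul_cos_nat_eq_sum (Q : ℝ[X]) {k : ℕ} (hk : k ≠ 0) (n : ℕ) :
    ∫ x in (0 : ℝ)..Real.pi, Q.eval x * Real.cos (k * x)
      = ∑ j ∈ Finset.range n, (-1) ^ j * ((derivative^[2 * j + 1] Q).eval Real.pi * (-1) ^ k
          - (derivative^[2 * j + 1] Q).eval 0) / (k : ℝ) ^ (2 * j + 2)
        + (-1) ^ n * (∫ x in (0 : ℝ)..Real.pi, (derivative^[2 * n] Q).eval x * Real.cos (k * x))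
          / (k : ℝ) ^ (2 * n) := by
  induction n with
  | zero => simp
  | succ n ih =>
    have hk' : (k : ℝ) ≠ 0 := Nat.cast_ne_zero.mpr hk
    have hodd : derivative^[2 * n + 1] Q = derivative (derivative^[2 * n] Q) :=
      Function.iterate_succ_apply' ..
    have heven : derivative^[2 * (n + 1)] Q = derivative (derivative^[2 * n + 1] Q) :=
      Function.iterate_succ_apply' ..
    rw [ih, (derivative^[2 * n] Q).integral_zero_pi_eval_mul_cos_nat hk, Finset.sum_range_succ,
      heven, hodd, add_assoc]
    congr 1
    field_simp
    ring

theorem integral_zero_pi_eval_mul_cos_nat_of_natDegree_le (Q : ℝ[X]) {k : ℕ} (hk : k ≠ 0)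
    {n : ℕ} (hQ : Q.natDegree ≤ 2 * n) :
    ∫ x in (0 : ℝ)..Real.pi, Q.eval x * Real.cos (k * x)
      = ∑ j ∈ Finset.range n, (-1) ^ j * ((derivative^[2 * j + 1] Q).eval Real.pi * (-1) ^ k
          - (derivative^[2 * j + 1] Q).eval 0) / (k : ℝ) ^ (2 * j + 2) := by
  rw [Q.integral_zero_pi_eval_mul_cos_nat_eq_sum hk (n + 1), Finset.sum_range_succ,
    iterate_derivative_eq_zero (by omega : Q.natDegree < 2 * n + 1),
    iterate_derivative_eq_zero (by omega : Q.natDegree < 2 * (n + 1))]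
  simp

end Polynomial

theorem int_P_cos (n : ℕ) (hn : 0 < n) (P : Polynomial ℝ)
    (h0 : ∀ j, 1 ≤ j → j ≤ n - 1 → (Polynomial.derivative^[2 * j - 1] P).eval 0 = 0)
    (h0n : (Polynomial.derivative^[2 * n - 1] P).eval 0 = (-1 : ℝ) ^ n)
    (hπ : ∀ j, 1 ≤ j → j ≤ n → (Polynomial.derivative^[2 * j - 1] P).eval Real.pi = 0)
    (hdeg : P.natDegree ≤ 2 * n) :
    ∀ k : ℕ, 0 < k →
      ∫ x in (0:ℝ)..Real.pi, P.eval x * Real.cos (k * x) = 1 / (k : ℝ) ^ (2 * n) := by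
  intro k hk
  rw [P.integral_zero_pi_eval_mul_cos_nat_of_natDegree_le hk.ne' hdeg,
    Finset.sum_eq_single_of_mem (n - 1) (Finset.mem_range.mpr (by omega))]
  · rw [show 2 * (n - 1) + 1 = 2 * n - 1 by omega, show 2 * (n - 1) + 2 = 2 * n by omega, h0n,
      hπ n hn le_rfl, zero_mul, zero_sub, mul_neg, ← pow_add, show n - 1 + n = 2 * (n - 1) + 1 by omega,
      pow_succ, pow_mul]
    norm_num
  · intro j hj hjn
    have hj' : j + 1 ≤ n - 1 := by have := Finset.mem_range.mp hj; omega
    rw [show 2 * j + 1 = 2 * (j + 1) - 1 by omega, h0 (j + 1) (by omega) hj',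
      hπ (j + 1) (by omega) (by omega)]
    simp
end

section
/- Given real numbers a_0, …, a_{n-1} and b_0, …, b_{n-1}, there exists a unique real polynomial p of degree at most 2n−1 such that p^{(2j)}(0) = a_j and p^{(2j)}(1) = b_j for all 0 ≤ j ≤ n−1. -/
open Polynomial

private lemma deg_le_one_zero (p : ℝ[X]) (hd : p.natDegree ≤ 1)
    (h0 : p.eval 0 = 0) (h1 : p.eval 1 = 0) : p = 0 := by
  have hdeg : p.degree ≤ 1 := degree_le_of_natDegree_le (by exact_mod_cast hd)
  have hp := eq_X_add_C_of_degree_le_one hdeg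
  rw [hp] at h0 h1
  simp at h0 h1
  rw [hp, h0] at h1 ⊢
  simp at h1
  simp [h1]

private lemma vanish : ∀ n : ℕ, 0 < n → ∀ p : ℝ[X], p.natDegree ≤ 2 * n - 1 →
    (∀ j < n, (derivative^[2 * j] p).eval 0 = 0 ∧ (derivative^[2 * j] p).eval 1 = 0) →
    p = 0 := by
  intro n hn
  induction n, hn using Nat.le_induction with
  | base =>
    intro p hd h
    obtain ⟨h0, h1⟩ := h 0 one_pos
    simpa using deg_le_one_zero p (by simpa using hd) (by simpa using h0) (by simpa using h1)
  | succ n hn ih =>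
    intro p hd h
    have hq : derivative^[2] p = 0 := by
      apply ih
      · calc (derivative^[2] p).natDegree ≤ p.natDegree - 2 := natDegree_iterate_derivative p 2
          _ ≤ 2 * n - 1 := by omega
      · intro j hj
        have := h (j + 1) (by omega)
        rw [show 2 * (j + 1) = 2 * j + 2 by ring, Function.iterate_add_apply] at this
        exact this
    have hdeg1 : p.natDegree ≤ 1 := by
      by_contra hc
      push_neg at hc
      have hpd : (derivative p).natDegree ≠ 0 := by
        have hdd := degree_derivative_eq p (by omega)
        have := natDegree_eq_of_degree_eq_some hdd
        omega
      have : (derivative (derivative p)) = 0 := by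
        simpa [Function.iterate_succ_apply'] using hq
      exact hpd (natDegree_eq_zero_of_derivative_eq_zero this)
    obtain ⟨h0, h1⟩ := h 0 (by omega)
    exact deg_le_one_zero p hdeg1 (by simpa using h0) (by simpa using h1)

noncomputable def lidMap (n : ℕ) : ℝ[X] →ₗ[ℝ] (Fin n → ℝ × ℝ) :=
  LinearMap.pi fun j =>
    ((Polynomial.leval 0).prod (Polynomial.leval 1)).comp
      ((Polynomial.derivative : ℝ[X] →ₗ[ℝ] ℝ[X]) ^ (2 * (j : ℕ)))

lemma lidMap_apply (n : ℕ) (p : ℝ[X]) (j : Fin n) :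
    lidMap n p j = ((derivative^[2 * (j : ℕ)] p).eval 0, (derivative^[2 * (j : ℕ)] p).eval 1) := by
  simp [lidMap, Module.End.pow_apply]

theorem lidstone_interpolation (n : ℕ) (hn : 0 < n) (a b : ℕ → ℝ) :
    ∃! p : Polynomial ℝ, p.natDegree ≤ 2 * n - 1 ∧
      ∀ j < n, (Polynomial.derivative^[2 * j] p).eval 0 = a j ∧
        (Polynomial.derivative^[2 * j] p).eval 1 = b j := by
  set L : degreeLT ℝ (2 * n) →ₗ[ℝ] (Fin n → ℝ × ℝ) :=
    (lidMap n).comp (Submodule.subtype _) with hL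
  have hfin : FiniteDimensional ℝ (degreeLT ℝ (2 * n)) :=
    Module.Finite.equiv (degreeLTEquiv ℝ (2 * n)).symm
  have hrank : Module.finrank ℝ (degreeLT ℝ (2 * n)) = Module.finrank ℝ (Fin n → ℝ × ℝ) := by
    rw [(degreeLTEquiv ℝ (2 * n)).finrank_eq]
    simp [Module.finrank_pi_fintype]
    ring
  have hinj : Function.Injective L := by
    rw [← LinearMap.ker_eq_bot]
    rw [LinearMap.ker_eq_bot']
    rintro ⟨p, hp⟩ hLp
    have hpd : p.natDegree ≤ 2 * n - 1 := by
      rcases eq_or_ne p 0 with rfl | hne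
      · simp
      · have := (mem_degreeLT.mp hp)
        have := (natDegree_lt_iff_degree_lt hne).mpr this
        omega
    have : p = 0 := by
      apply vanish n hn p hpd
      intro j hj
      have := congrFun hLp ⟨j, hj⟩
      rw [hL] at this
      simp only [LinearMap.comp_apply, Submodule.subtype_apply] at this
      rw [lidMap_apply] at this
      simpa [Prod.ext_iff] using this
    simp [this]
  have hsurj : Function.Surjective L :=
    (LinearMap.injective_iff_surjective_of_finrank_eq_finrank hrank).mp hinj
  obtain ⟨⟨p, hp⟩, hLp⟩ := hsurj (fun j => (a j, b j))
  have hpd : p.natDegree ≤ 2 * n - 1 := by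
    rcases eq_or_ne p 0 with rfl | hne
    · simp
    · have := (mem_degreeLT.mp hp)
      have := (natDegree_lt_iff_degree_lt hne).mpr this
      omega
  refine ⟨p, ⟨hpd, fun j hj => ?_⟩, fun q ⟨hqd, hq⟩ => ?_⟩
  · have := congrFun hLp ⟨j, hj⟩
    rw [hL] at this
    simp only [LinearMap.comp_apply, Submodule.subtype_apply] at this
    rw [lidMap_apply] at this
    simpa [Prod.ext_iff] using this
  · have hdiff : q - p = 0 := by
      apply vanish n hn _ (le_trans (natDegree_sub_le q p) (by omega)) 
      intro j hj
      have hpj := congrFun hLp ⟨j, hj⟩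
      rw [hL] at hpj
      simp only [LinearMap.comp_apply, Submodule.subtype_apply] at hpj
      rw [lidMap_apply] at hpj
      simp only [Prod.ext_iff] at hpj
      obtain ⟨hq0, hq1⟩ := hq j hj
      have hiter : derivative^[2 * j] (q - p) = derivative^[2 * j] q - derivative^[2 * j] p := by
        induction (2 * j) with
        | zero => simp
        | succ k ihk => simp [Function.iterate_succ_apply', ihk, derivative_sub]
      constructor <;> simp [hiter, hq0, hq1, hpj.1, hpj.2]
    exact sub_eq_zero.mp hdiff
end

section
/- With the Lidstone polynomials Λ_k defined by Λ_0(x) = x, Λ_k'' = Λ_{k-1}, Λ_k(0) = Λ_k(1) = 0 for k ≥ 1, one has for every k ≥ 1: Λ_k(x) = x^{2k+1}/(2k+1)! − ∑_{j=0}^{k-1} Λ_j(x)/(2k+1−2j)!. -/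
/-!
Let `F k` be the right-hand side. Differentiating twice lowers the index, `F (k + 1)'' = F k`,
and `F (k + 1)` vanishes at `0` (every `Λ j` does) and at `1` (there only `Λ 0 = X` survives,
cancelling the monomial). A polynomial is determined by its second derivative and its values at
`0` and `1`, so induction on `k` gives `Λ k = F k`.
-/
open Polynomial Finset

theorem Polynomial.natDegree_lt_two_of_derivative_derivative_eq_zero {R : Type*} [Semiring R]
    [IsAddTorsionFree R] {p : R[X]} (h : derivative (derivative p) = 0) : p.natDegree < 2 := by
  have := derivative_eq_zero.1 h
  rw [natDegree_derivative] at this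
  omega

theorem Polynomial.eq_of_derivative_derivative_eq_of_eval_zero_eq_of_eval_one_eq {R : Type*}
    [CommRing R] [IsDomain R] [IsAddTorsionFree R] {p q : R[X]}
    (h : derivative (derivative p) = derivative (derivative q))
    (h0 : p.eval 0 = q.eval 0) (h1 : p.eval 1 = q.eval 1) : p = q := by
  classical
  rw [← sub_eq_zero]
  refine eq_zero_of_natDegree_lt_card_of_eval_eq_zero' _ ({0, 1} : Finset R) ?_ ?_
  · simp [h0, h1]
  · rw [card_pair zero_ne_one]
    exact natDegree_lt_two_of_derivative_derivative_eq_zero (by simp [h])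

theorem Polynomial.derivative_C_inv_factorial_mul_X_pow {K : Type*} [Field K] [CharZero K]
    (n : ℕ) :
    derivative (C (1 / ((n + 1).factorial : K)) * X ^ (n + 1)) =
      C (1 / (n.factorial : K)) * X ^ n := by
  rw [derivative_C_mul_X_pow, Nat.add_sub_cancel, Nat.factorial_succ, Nat.cast_mul]
  congr 2
  field_simp

namespace Lidstone

variable {K : Type*} [Field K]

noncomputable def recursionRHS (Λ : ℕ → K[X]) (k : ℕ) : K[X] :=
  C (1 / ((2 * k + 1).factorial : K)) * X ^ (2 * k + 1)
    - ∑ j ∈ range k, C (1 / ((2 * k + 1 - 2 * j).factorial : K)) * Λ j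

theorem recursionRHS_zero (Λ : ℕ → K[X]) : recursionRHS Λ 0 = X := by
  simp [recursionRHS]

theorem derivative_derivative_recursionRHS_succ [CharZero K] {Λ : ℕ → K[X]} (h0 : Λ 0 = X)
    (hrec : ∀ k, 1 ≤ k → derivative (derivative (Λ k)) = Λ (k - 1)) (m : ℕ) :
    derivative (derivative (recursionRHS Λ (m + 1))) = recursionRHS Λ m := by
  have hpow : derivative (derivative
      (C (1 / ((2 * (m + 1) + 1).factorial : K)) * X ^ (2 * (m + 1) + 1))) =
      C (1 / ((2 * m + 1).factorial : K)) * X ^ (2 * m + 1) := by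
    rw [show 2 * (m + 1) + 1 = 2 * m + 1 + 1 + 1 by ring, derivative_C_inv_factorial_mul_X_pow,
      derivative_C_inv_factorial_mul_X_pow]
  have hterm (j : ℕ) : derivative (derivative
      (C (1 / ((2 * (m + 1) + 1 - 2 * (j + 1)).factorial : K)) * Λ (j + 1))) =
      C (1 / ((2 * m + 1 - 2 * j).factorial : K)) * Λ j := by
    rw [derivative_C_mul, derivative_C_mul, hrec (j + 1) (by omega), Nat.add_sub_cancel,
      show 2 * (m + 1) + 1 - 2 * (j + 1) = 2 * m + 1 - 2 * j by omega]
  simp only [recursionRHS, sum_range_succ', map_sub, map_add, map_sum, hpow, hterm]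
  simp [h0]

theorem eval_zero_recursionRHS {Λ : ℕ → K[X]} (hΛ : ∀ j, (Λ j).eval 0 = 0) (k : ℕ) :
    (recursionRHS Λ (k + 1)).eval 0 = 0 := by
  simp [recursionRHS, eval_finsetSum, hΛ]

theorem eval_one_recursionRHS {Λ : ℕ → K[X]} (h0 : Λ 0 = X) (hΛ : ∀ j, 1 ≤ j → (Λ j).eval 1 = 0)
    (k : ℕ) : (recursionRHS Λ (k + 1)).eval 1 = 0 := by
  simp [recursionRHS, eval_finsetSum, sum_range_succ', h0, hΛ]

end Lidstone

open Lidstone in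
theorem lidstone_recursion (Λ : ℕ → Polynomial ℝ)
    (h0 : Λ 0 = Polynomial.X)
    (hrec : ∀ k : ℕ, 1 ≤ k →
      Polynomial.derivative (Polynomial.derivative (Λ k)) = Λ (k - 1))
    (hval : ∀ k : ℕ, 1 ≤ k → (Λ k).eval 0 = 0 ∧ (Λ k).eval 1 = 0) :
    ∀ k : ℕ, 1 ≤ k →
      Λ k = Polynomial.C (1 / ((2 * k + 1).factorial : ℝ)) * Polynomial.X ^ (2 * k + 1)
        - ∑ j ∈ Finset.range k,
            Polynomial.C (1 / ((2 * k + 1 - 2 * j).factorial : ℝ)) * Λ j := by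
  have heval0 (j : ℕ) : (Λ j).eval 0 = 0 := by
    rcases j with _ | j
    · simp [h0]
    · exact (hval (j + 1) (by omega)).1
  have heval1 (j : ℕ) (hj : 1 ≤ j) : (Λ j).eval 1 = 0 := (hval j hj).2
  suffices ∀ k, Λ k = recursionRHS Λ k from fun k _ ↦ this k
  intro k
  induction k with
  | zero => rw [h0, recursionRHS_zero]
  | succ m ih =>
    refine eq_of_derivative_derivative_eq_of_eval_zero_eq_of_eval_one_eq ?_ ?_ ?_
    · rw [hrec (m + 1) (by omega), derivative_derivative_recursionRHS_succ h0 hrec, ← ih,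
        Nat.add_sub_cancel]
    · rw [heval0, eval_zero_recursionRHS heval0]
    · rw [heval1 _ (by omega), eval_one_recursionRHS h0 heval1]
end

section
/- If q : ℝ → ℝ is a polynomial with q(0) = 0 and ∫_0^π q(x) cos(k x) dx = 1/k^{2n} for all positive integers k, then ∑_{k=1}^∞ 1/k^{2n} = −(1/2) ∫_0^π q(x) dx. -/
/-!
Write `q = X * r`. Then `g x = r x / sinc (x / 2)` is continuous on `[0, π]` and
`q x = 2 sin (x / 2) * g x` there, so the Dirichlet kernel identity
`2 sin (x / 2) * ∑_{k < N} cos ((k + 1) x) = sin ((N + 1/2) x) - sin (x / 2)` turns the partial sums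
`∑_{k < N} ∫ q x cos ((k + 1) x)` into `∫ g x sin ((N + 1/2) x) - (1/2) ∫ q`. The first term tends to
`0` by the Riemann–Lebesgue lemma, and the series has nonnegative terms, so it sums to
`-(1/2) ∫ q`.
-/

open Polynomial MeasureTheory Filter Real Set Topology Finset
open scoped FourierTransform

theorem tendsto_integral_mul_sin_atTop {f : ℝ → ℝ} (hf : Integrable f) :
    Tendsto (fun t => ∫ x, f x * sin (t * x)) atTop (𝓝 0) := by
  have hscale : Tendsto (fun t : ℝ => t / (2 * π)) atTop (cocompact ℝ) :=
    (tendsto_id.atTop_div_const (by positivity)).mono_right atTop_le_cocompact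
  have hRL := (Complex.continuous_im.tendsto 0).comp
    ((Real.tendsto_integral_exp_smul_cocompact fun x => (f x : ℂ)).comp hscale)
  rw [Complex.zero_im] at hRL
  have him : ∀ t x : ℝ, (𝐞 (-(x * (t / (2 * π)))) • (f x : ℂ)).im = -(f x * sin (t * x)) := by
    intro t x
    have hθ : 2 * π * -(x * (t / (2 * π))) = -(t * x) := by field_simp
    rw [Circle.smul_def, Real.fourierChar_apply, hθ, smul_eq_mul, Complex.mul_im]
    simp only [Complex.ofReal_im, Complex.ofReal_re, Complex.exp_ofReal_mul_I_im,
      Complex.exp_ofReal_mul_I_re, mul_zero, zero_add, Real.sin_neg]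
    ring
  simpa using hRL.neg.congr fun t => by
    have hint : Integrable (fun x : ℝ => 𝐞 (-(x * (t / (2 * π)))) • (f x : ℂ)) :=
      (fourierIntegral_convergent_iff' (ContinuousLinearMap.mul ℝ ℝ) _).2 hf.ofReal
    rw [Function.comp_apply, Function.comp_apply, ← Complex.imCLM_apply,
      ← ContinuousLinearMap.integral_comp_comm _ hint]
    simp_rw [Complex.imCLM_apply, him t]
    rw [integral_neg, neg_neg]

theorem tendsto_setIntegral_mul_sin_atTop {f : ℝ → ℝ} {s : Set ℝ} (hs : MeasurableSet s)
    (hf : IntegrableOn f s) :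
    Tendsto (fun t => ∫ x in s, f x * sin (t * x)) atTop (𝓝 0) := by
  refine (tendsto_integral_mul_sin_atTop ((integrable_indicator_iff hs).2 hf)).congr fun t => ?_
  rw [← integral_indicator hs]
  simp_rw [indicator_mul_left]

theorem tendsto_intervalIntegral_mul_sin_atTop {f : ℝ → ℝ} {a b : ℝ}
    (hf : IntervalIntegrable f volume a b) :
    Tendsto (fun t => ∫ x in a..b, f x * sin (t * x)) atTop (𝓝 0) := by
  have h := (tendsto_setIntegral_mul_sin_atTop measurableSet_Ioc hf.1).sub
    (tendsto_setIntegral_mul_sin_atTop measurableSet_Ioc hf.2)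
  rwa [sub_zero] at h

theorem Real.sinc_pos {y : ℝ} (hy : |y| < π) : 0 < sinc y := by
  wlog hy0 : 0 ≤ y
  · simpa [sinc_neg] using this (y := -y) (by rwa [abs_neg]) (by linarith)
  rcases hy0.eq_or_lt with rfl | hy0
  · simp
  · rw [sinc_of_ne_zero hy0.ne']
    exact div_pos (sin_pos_of_pos_of_lt_pi hy0 (abs_lt.1 hy).2) hy0

theorem two_sin_half_mul_sum_cos (N : ℕ) (x : ℝ) :
    2 * sin (x / 2) * ∑ k ∈ range N, cos ((k + 1) * x)
      = sin ((N + 1 / 2) * x) - sin (x / 2) := by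
  induction N with
  | zero => simp; ring_nf
  | succ N ih =>
    have h := sin_sub_sin ((N + 1 + 1 / 2) * x) ((N + 1 / 2) * x)
    rw [show ((N + 1 + 1 / 2) * x - (N + 1 / 2) * x) / 2 = x / 2 by ring,
      show ((N + 1 + 1 / 2) * x + (N + 1 / 2) * x) / 2 = (N + 1) * x by ring] at h
    rw [sum_range_succ, mul_add, ih]
    push_cast
    linarith

theorem Polynomial.exists_continuousOn_eval_eq_mul_two_sin_half {q : ℝ[X]} (hq : q.eval 0 = 0) :
    ∃ g : ℝ → ℝ, ContinuousOn g (Ioo (-(2 * π)) (2 * π)) ∧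
      ∀ x ∈ Ioo (-(2 * π)) (2 * π), q.eval x = g x * (2 * sin (x / 2)) := by
  obtain ⟨r, rfl⟩ : X ∣ q := by rwa [X_dvd_iff, coeff_zero_eq_eval_zero]
  have hsinc : ∀ x ∈ Ioo (-(2 * π)) (2 * π), sinc (x / 2) ≠ 0 := fun x hx =>
    (sinc_pos (by rw [abs_div, abs_two, div_lt_iff₀ two_pos, mul_comm]; exact abs_lt.2 hx)).ne'
  refine ⟨fun x => r.eval x / sinc (x / 2),
    r.continuousOn.div (continuous_sinc.comp (continuous_id.div_const 2)).continuousOn hsinc,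
    fun x hx => ?_⟩
  rcases eq_or_ne x 0 with rfl | hx0
  · simp
  · have hsinc_x := hsinc x hx
    simp only [eval_mul, eval_X]
    rw [sinc_of_ne_zero (div_ne_zero hx0 two_ne_zero)] at hsinc_x ⊢
    have hsin : sin (x / 2) ≠ 0 := (div_ne_zero_iff.1 hsinc_x).1
    field_simp

theorem sum_intervalIntegral_mul_cos_eq {q g : ℝ → ℝ} {a b : ℝ}
    (hq : IntervalIntegrable q volume a b) (hg : IntervalIntegrable g volume a b)
    (hqg : ∀ x ∈ uIcc a b, q x = g x * (2 * sin (x / 2))) (N : ℕ) :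
    ∑ k ∈ range N, ∫ x in a..b, q x * cos ((k + 1) * x)
      = (∫ x in a..b, g x * sin ((N + 1 / 2) * x)) - 1 / 2 * ∫ x in a..b, q x := by
  have hcos : ∀ k ∈ range N, IntervalIntegrable (fun x => q x * cos ((k + 1) * x)) volume a b :=
    fun k _ => hq.mul_continuousOn (by fun_prop)
  have hsin : IntervalIntegrable (fun x => g x * sin ((N + 1 / 2) * x)) volume a b :=
    hg.mul_continuousOn (by fun_prop)
  rw [← intervalIntegral.integral_finsetSum hcos, ← intervalIntegral.integral_const_mul,
    ← intervalIntegral.integral_sub hsin (hq.const_mul _)]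
  refine intervalIntegral.integral_congr fun x hx => ?_
  have hkernel := two_sin_half_mul_sum_cos N x
  simp only [← mul_sum, hqg x hx]
  linear_combination g x * hkernel

theorem Polynomial.tendsto_sum_intervalIntegral_mul_cos {q : ℝ[X]} (hq : q.eval 0 = 0) :
    Tendsto (fun N : ℕ => ∑ k ∈ range N, ∫ x in (0 : ℝ)..π, q.eval x * cos ((k + 1) * x))
      atTop (𝓝 (-(1 / 2) * ∫ x in (0 : ℝ)..π, q.eval x)) := by
  obtain ⟨g, hg, hqg⟩ := q.exists_continuousOn_eval_eq_mul_two_sin_half hq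
  have hsub : uIcc 0 π ⊆ Ioo (-(2 * π)) (2 * π) := by
    rw [uIcc_of_le pi_pos.le]
    exact Icc_subset_Ioo (by linarith [pi_pos]) (by linarith [pi_pos])
  have hg' : IntervalIntegrable g volume 0 π := (hg.mono hsub).intervalIntegrable
  have hhalf : Tendsto (fun N : ℕ => (N : ℝ) + 1 / 2) atTop atTop :=
    tendsto_atTop_add_const_right _ _ tendsto_natCast_atTop_atTop
  have hRL := ((tendsto_intervalIntegral_mul_sin_atTop hg').comp hhalf).sub_const
    (1 / 2 * ∫ x in (0 : ℝ)..π, q.eval x)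
  rw [zero_sub, ← neg_mul] at hRL
  exact hRL.congr fun N =>
    (sum_intervalIntegral_mul_cos_eq (q.continuous.intervalIntegrable _ _) hg'
      (fun x hx => hqg x (hsub hx)) N).symm

theorem sum_inv_pow_eq_neg_half_integral_general (n : ℕ) (q : Polynomial ℝ)
    (hq0 : q.eval 0 = 0)
    (hq : ∀ k : ℕ, 0 < k →
      ∫ x in (0:ℝ)..Real.pi, q.eval x * Real.cos (k * x) = 1 / (k : ℝ) ^ (2 * n)) :
    ∑' k : ℕ, 1 / ((k : ℝ) + 1) ^ (2 * n)
      = -(1 / 2) * ∫ x in (0:ℝ)..Real.pi, q.eval x := by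
  have hcoeff : ∀ k : ℕ, 1 / ((k : ℝ) + 1) ^ (2 * n)
      = ∫ x in (0 : ℝ)..π, q.eval x * cos ((k + 1) * x) := fun k => by
    simpa using (hq (k + 1) k.succ_pos).symm
  refine ((hasSum_iff_tendsto_nat_of_nonneg (fun k => by positivity) _).2 ?_).tsum_eq
  simpa only [hcoeff] using q.tendsto_sum_intervalIntegral_mul_cos hq0

theorem sum_inv_pow_eq_neg_half_integral (n : ℕ) (hn : 0 < n) (q : Polynomial ℝ)
    (hq0 : q.eval 0 = 0)
    (hq : ∀ k : ℕ, 0 < k →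
      ∫ x in (0:ℝ)..Real.pi, q.eval x * Real.cos (k * x) = 1 / (k : ℝ) ^ (2 * n)) :
    ∑' k : ℕ, 1 / ((k : ℝ) + 1) ^ (2 * n)
      = -(1 / 2) * ∫ x in (0:ℝ)..Real.pi, q.eval x :=
  sum_inv_pow_eq_neg_half_integral_general n q hq0 hq
end

section
/- For every positive integer n, ζ(2n) = ∑_{k=1}^∞ 1/k^{2n} = (−1)^{n+1} π^{2n} Λ_n'(1) / 2, where Λ_n is the n-th Lidstone polynomial. -/
/-!
The Lidstone polynomials are rescaled Bernoulli polynomials. The polynomials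
`Sₖ(x) = 2ᵏ/k! · Bₖ((x + 1)/2)` satisfy `S₁ = X` and `S'ₖ₊₁ = Sₖ`, and for `n ≥ 1` the odd one
`S₂ₙ₊₁` vanishes at `0` and `1`, because `B₂ₙ₊₁(1/2) = B₂ₙ₊₁(1) = 0`. Since a polynomial is
determined by its second derivative and its values at `0` and `1`, induction gives
`Λₙ = S₂ₙ₊₁`, hence `Λₙ'(1) = S₂ₙ(1) = 4ⁿ B₂ₙ / (2n)!`, and Euler's evaluation
`ζ(2n) = (-1)ⁿ⁺¹ 2²ⁿ⁻¹ π²ⁿ B₂ₙ / (2n)!` turns into the claimed formula.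
-/

open Polynomial

namespace Polynomial

theorem eq_of_derivative_derivative_eq {R : Type*} [CommRing R] [IsAddTorsionFree R] {p q : R[X]}
    (h : derivative (derivative p) = derivative (derivative q))
    (h0 : p.eval 0 = q.eval 0) (h1 : p.eval 1 = q.eval 1) : p = q := by
  have hdeg : (p - q).natDegree ≤ 1 := by
    have h' : derivative (derivative (p - q)) = 0 := by simp [h]
    rw [derivative_eq_zero, natDegree_derivative] at h'
    omega
  have hlin := eq_X_add_C_of_natDegree_le_one hdeg
  have hb : (p - q).coeff 0 = 0 := by
    simpa [h0] using (congrArg (eval 0) hlin).symm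
  have ha : (p - q).coeff 1 = 0 := by
    simpa [h1, hb] using (congrArg (eval 1) hlin).symm
  rw [← sub_eq_zero, hlin, ha, hb]
  simp

theorem bernoulli_eval_one_half_of_odd {k : ℕ} (hk : Odd k) :
    (bernoulli k).eval (1 / 2 : ℚ) = 0 := by
  have h := bernoulli_eval_one_sub k (1 / 2)
  rw [hk.neg_one_pow] at h
  norm_num at h
  linarith

end Polynomial

theorem bernoulliFun_one_half_of_odd {k : ℕ} (hk : Odd k) : bernoulliFun k (1 / 2) = 0 := by
  have h := congrArg (algebraMap ℚ ℝ) (bernoulli_eval_one_half_of_odd hk)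
  rwa [← eval_map_apply, map_zero, map_div₀, map_one, map_ofNat] at h

open scoped Nat

noncomputable def scaledBernoulli (k : ℕ) : ℝ[X] :=
  C (2 ^ k / k ! : ℝ) * ((Polynomial.bernoulli k).map (algebraMap ℚ ℝ)).comp (C 2⁻¹ * (X + 1))

theorem scaledBernoulli_eval (k : ℕ) (x : ℝ) :
    (scaledBernoulli k).eval x = 2 ^ k / k ! * bernoulliFun k ((x + 1) / 2) := by
  simp [scaledBernoulli, bernoulliFun, div_eq_inv_mul]

theorem scaledBernoulli_one : scaledBernoulli 1 = X := by
  simp only [scaledBernoulli, Polynomial.bernoulli_one, Polynomial.map_sub, Polynomial.map_X,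
    Polynomial.map_C, sub_comp, X_comp, C_comp]
  have h2 : algebraMap ℚ ℝ 2⁻¹ = 2⁻¹ := by simp
  rw [h2, mul_add, mul_one, add_sub_cancel_right, ← mul_assoc, ← C_mul]
  norm_num

theorem derivative_scaledBernoulli_succ (k : ℕ) :
    derivative (scaledBernoulli (k + 1)) = scaledBernoulli k := by
  have hcast : ((k : ℝ[X]) + 1) = C ((k : ℝ) + 1) := by simp
  simp only [scaledBernoulli, derivative_C_mul, derivative_comp, derivative_map,
    derivative_bernoulli_add_one, derivative_add, derivative_X, derivative_one, add_zero, mul_one,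
    Polynomial.map_mul, Polynomial.map_add, Polynomial.map_natCast, Polynomial.map_one, mul_comp,
    add_comp, natCast_comp, one_comp]
  rw [hcast, ← mul_assoc, ← mul_assoc, ← C_mul, ← C_mul]
  congr 2
  rw [Nat.factorial_succ]
  push_cast
  field_simp
  ring

theorem scaledBernoulli_eval_zero_of_odd {k : ℕ} (hk : Odd k) :
    (scaledBernoulli k).eval 0 = 0 := by
  rw [scaledBernoulli_eval, zero_add, bernoulliFun_one_half_of_odd hk, mul_zero]

theorem scaledBernoulli_eval_one {k : ℕ} (hk : k ≠ 1) :
    (scaledBernoulli k).eval 1 = 2 ^ k / k ! * _root_.bernoulli k := by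
  rw [scaledBernoulli_eval, one_add_one_eq_two, div_self two_ne_zero,
    bernoulliFun_endpoints_eq_of_ne_one hk, bernoulliFun_eval_zero]

theorem lidstone_eq_scaledBernoulli (Λ : ℕ → ℝ[X]) (h0 : Λ 0 = X)
    (hrec : ∀ k : ℕ, 1 ≤ k → derivative (derivative (Λ k)) = Λ (k - 1))
    (hval : ∀ k : ℕ, 1 ≤ k → (Λ k).eval 0 = 0 ∧ (Λ k).eval 1 = 0) (n : ℕ) :
    Λ n = scaledBernoulli (2 * n + 1) := by
  induction n with
  | zero => rw [h0, scaledBernoulli_one]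
  | succ n ih =>
    have hodd : Odd (2 * (n + 1) + 1) := odd_two_mul_add_one _
    refine eq_of_derivative_derivative_eq ?_ ?_ ?_
    · rw [show 2 * (n + 1) + 1 = 2 * n + 1 + 1 + 1 by ring, hrec (n + 1) n.succ_pos,
        Nat.add_sub_cancel, ih, derivative_scaledBernoulli_succ, derivative_scaledBernoulli_succ]
    · rw [(hval _ n.succ_pos).1, scaledBernoulli_eval_zero_of_odd hodd]
    · rw [(hval _ n.succ_pos).2, scaledBernoulli_eval_one (by omega),
        bernoulli_eq_zero_of_odd hodd (by omega), Rat.cast_zero, mul_zero]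

theorem tsum_one_div_nat_add_one_pow_two_mul {k : ℕ} (hk : k ≠ 0) :
    ∑' m : ℕ, 1 / ((m : ℝ) + 1) ^ (2 * k)
      = (-1 : ℝ) ^ (k + 1) * 2 ^ (2 * k - 1) * Real.pi ^ (2 * k) * _root_.bernoulli (2 * k)
        / (2 * k)! := by
  have h := hasSum_zeta_nat hk
  rw [← h.tsum_eq, h.summable.tsum_eq_zero_add]
  simp [hk]

theorem zeta_even_lidstone (Λ : ℕ → Polynomial ℝ)
    (h0 : Λ 0 = Polynomial.X)
    (hrec : ∀ k : ℕ, 1 ≤ k →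
      Polynomial.derivative (Polynomial.derivative (Λ k)) = Λ (k - 1))
    (hval : ∀ k : ℕ, 1 ≤ k → (Λ k).eval 0 = 0 ∧ (Λ k).eval 1 = 0) :
    ∀ n : ℕ, 0 < n →
      riemannZeta (2 * n)
          = (((-1 : ℝ) ^ (n + 1) * Real.pi ^ (2 * n) * ((Λ n).derivative.eval 1) / 2 : ℝ) : ℂ) ∧
      ∑' k : ℕ, 1 / ((k : ℝ) + 1) ^ (2 * n)
          = (-1 : ℝ) ^ (n + 1) * Real.pi ^ (2 * n) * ((Λ n).derivative.eval 1) / 2 := by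
  intro n hn
  have hslope : (Λ n).derivative.eval 1 = 2 ^ (2 * n) / (2 * n)! * _root_.bernoulli (2 * n) := by
    rw [lidstone_eq_scaledBernoulli Λ h0 hrec hval, derivative_scaledBernoulli_succ,
      scaledBernoulli_eval_one (by omega)]
  have hclosed : (-1 : ℝ) ^ (n + 1) * Real.pi ^ (2 * n) * ((Λ n).derivative.eval 1) / 2
      = (-1 : ℝ) ^ (n + 1) * 2 ^ (2 * n - 1) * Real.pi ^ (2 * n) * _root_.bernoulli (2 * n)
        / (2 * n)! := by
    have hpow : (2 : ℝ) ^ (2 * n) = 2 * 2 ^ (2 * n - 1) := by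
      rw [← pow_succ', Nat.sub_add_cancel (by omega)]
    rw [hslope, hpow]
    ring
  refine ⟨?_, ?_⟩
  · rw [hclosed, riemannZeta_two_mul_nat hn.ne']
    norm_cast
  · rw [hclosed, tsum_one_div_nat_add_one_pow_two_mul hn.ne']
end
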